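/- Let A(n,k) denote the number of 132-avoiding permutations σ of {1,…,n} with mmp(0,k,0,0)(σ) = 0. Then for all integers n ≥ 2 and 1 ≤ k ≤ n, A(n,k) = A(n−1,k) + Σ_{i=1}^{k−1} Cat(i−1)·A(n−i, k−i), where Cat(m) denotes the m-th Catalan number. -/

import Mathlib

/-- A permutation `σ` of `{1,…,n}` (as a permutation of `Fin n`) avoids the pattern 132 if
there are no indices `i < j < k` with `σ i < σ k < σ j`. -/
def Avoids132 (n : ℕ) (σ : Equiv.Perm (Fin n)) : Prop :=
  ∀ i j k : Fin n, i < j → j < k → ¬(σ i < σ k ∧ σ k < σ j)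

/-- `mmp n a b c d σ` is the number of indices `i` matching the marked mesh pattern
`MMP(a,b,c,d)` in `σ`: there are at least `a` indices `j > i` with `σ j > σ i`,
at least `b` indices `j < i` with `σ j > σ i`, at least `c` indices `j < i` with
`σ j < σ i`, and at least `d` indices `j > i` with `σ j < σ i`. -/
noncomputable def mmp (n a b c d : ℕ) (σ : Equiv.Perm (Fin n)) : ℕ :=
  Nat.card {i : Fin n |
    a ≤ Nat.card {j : Fin n | i < j ∧ σ i < σ j} ∧
    b ≤ Nat.card {j : Fin n | j < i ∧ σ i < σ j} ∧
    c ≤ Nat.card {j : Fin n | j < i ∧ σ j < σ i} ∧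
    d ≤ Nat.card {j : Fin n | i < j ∧ σ j < σ i}}

/-- `A n k` is the number of 132-avoiding permutations `σ` of `{1,…,n}` with
`mmp(0,k,0,0)(σ) = 0`. -/
noncomputable def A (n k : ℕ) : ℕ :=
  Nat.card {σ : Equiv.Perm (Fin n) | Avoids132 n σ ∧ mmp n 0 k 0 0 σ = 0}

/-!
In a 132-avoiding permutation every entry left of the maximum exceeds every entry right of it, so
the permutation is the maximum glued between a 132-avoiding `α` (left, high values) and a
132-avoiding `β` (right, low values). Entries of `α` keep their numbers of larger entries to their
left, the maximum has none, and entries of `β` gain `p + 1`, where `p` is the length of `α`. Hence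
`A (m + 1) k = ∑_{p + q = m} A p k * A q (k - p - 1)` for `k ≥ 1`. If `p < k` the bound on `α` is
vacuous and `A p k = Cat p` by the Catalan recurrence; the terms with `k ≤ p + 1` and `q > 0`
vanish, and the term `p = m` is `A m k`.
-/

open Equiv Finset Fin

def numLargerBefore {n : ℕ} (σ : Perm (Fin n)) (i : Fin n) : ℕ :=
  #{j | j < i ∧ σ i < σ j}

lemma numLargerBefore_eq_sum {n : ℕ} (σ : Perm (Fin n)) (i : Fin n) :
    numLargerBefore σ i = ∑ j, if j < i ∧ σ i < σ j then 1 else 0 :=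
  card_filter _ _

def boundedAvoiders (n k : ℕ) : Set (Perm (Fin n)) :=
  {σ | Avoids132 n σ ∧ ∀ i, numLargerBefore σ i < k}

lemma mmp_zero_iff {n k : ℕ} (σ : Perm (Fin n)) :
    mmp n 0 k 0 0 σ = 0 ↔ ∀ i, numLargerBefore σ i < k := by
  simp [mmp, numLargerBefore]

lemma A_eq_card_boundedAvoiders (n k : ℕ) : A n k = Nat.card (boundedAvoiders n k) := by
  simp only [A, boundedAvoiders, mmp_zero_iff]

section Glue

variable {p q : ℕ}

namespace Fin

@[simp] lemma castAdd_castSucc_lt_castAdd_castSucc_iff {i i' : Fin p} :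
    castAdd q i.castSucc < castAdd q i'.castSucc ↔ i < i' := by
  simp [Fin.lt_def, -val_fin_lt]

@[simp] lemma castAdd_castSucc_lt_castAdd_last (i : Fin p) :
    castAdd q i.castSucc < castAdd q (last p) := by
  simp [Fin.lt_def]

@[simp] lemma castAdd_lt_natAdd (i : Fin (p + 1)) (j : Fin q) : castAdd q i < natAdd (p + 1) j := by
  simp [Fin.lt_def]; omega

@[simp] lemma not_natAdd_lt_castAdd (i : Fin (p + 1)) (j : Fin q) :
    ¬ natAdd (p + 1) j < castAdd q i :=
  (castAdd_lt_natAdd i j).asymm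

@[simp] lemma not_castAdd_last_lt_castAdd_castSucc (i : Fin p) :
    ¬ castAdd q (last p) < castAdd q i.castSucc :=
  (castAdd_castSucc_lt_castAdd_last i).asymm

lemma eq_left_or_eq_mid_or_eq_right (x : Fin (p + 1 + q)) :
    (∃ i : Fin p, x = castAdd q i.castSucc) ∨ x = castAdd q (last p) ∨
      ∃ j : Fin q, x = natAdd (p + 1) j := by
  induction x using addCases with
  | left x => induction x using lastCases <;> simp
  | right j => simp

end Fin

def glueFun (α : Perm (Fin p)) (β : Perm (Fin q)) : Fin (p + 1 + q) → Fin (p + 1 + q) :=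
  addCases (lastCases ⟨p + q, by omega⟩ fun i => ⟨q + α i, by omega⟩) fun j => ⟨β j, by omega⟩

variable (α : Perm (Fin p)) (β : Perm (Fin q))

lemma glueFun_injective : Function.Injective (glueFun α β) := by
  intro x y h
  rcases x.eq_left_or_eq_mid_or_eq_right with ⟨i, rfl⟩ | rfl | ⟨j, rfl⟩ <;>
  rcases y.eq_left_or_eq_mid_or_eq_right with ⟨i', rfl⟩ | rfl | ⟨j', rfl⟩ <;>
  simp [glueFun, Fin.ext_iff] at h ⊢ <;> first | omega | simpa [Fin.val_inj] using h

noncomputable def glue : Perm (Fin (p + 1 + q)) :=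
  Equiv.ofBijective _ (Finite.injective_iff_bijective.mp (glueFun_injective α β))

@[simp] lemma val_glue_left (i : Fin p) : (glue α β (castAdd q i.castSucc) : ℕ) = q + α i := by
  simp [glue, glueFun]

@[simp] lemma val_glue_mid : (glue α β (castAdd q (last p)) : ℕ) = p + q := by
  simp [glue, glueFun]

@[simp] lemma val_glue_right (j : Fin q) : (glue α β (natAdd (p + 1) j) : ℕ) = β j := by
  simp [glue, glueFun]

section Comparisons

variable {α β} (i i' : Fin p) (j j' : Fin q)

@[simp] lemma glue_left_lt_left_iff :
    glue α β (castAdd q i.castSucc) < glue α β (castAdd q i'.castSucc) ↔ α i < α i' := by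
  rw [Fin.lt_def, Fin.lt_def, val_glue_left, val_glue_left]; omega

@[simp] lemma glue_right_lt_right_iff :
    glue α β (natAdd (p + 1) j) < glue α β (natAdd (p + 1) j') ↔ β j < β j' := by
  rw [Fin.lt_def, Fin.lt_def, val_glue_right, val_glue_right]

@[simp] lemma glue_right_lt_left :
    glue α β (natAdd (p + 1) j) < glue α β (castAdd q i.castSucc) := by
  simp [Fin.lt_def]; omega

@[simp] lemma glue_left_lt_mid :
    glue α β (castAdd q i.castSucc) < glue α β (castAdd q (last p)) := by
  simp [Fin.lt_def]; omega

@[simp] lemma glue_right_lt_mid : glue α β (natAdd (p + 1) j) < glue α β (castAdd q (last p)) := by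
  simp [Fin.lt_def]; omega

@[simp] lemma not_glue_left_lt_right :
    ¬ glue α β (castAdd q i.castSucc) < glue α β (natAdd (p + 1) j) :=
  (glue_right_lt_left i j).asymm

@[simp] lemma not_glue_mid_lt_left :
    ¬ glue α β (castAdd q (last p)) < glue α β (castAdd q i.castSucc) :=
  (glue_left_lt_mid i).asymm

@[simp] lemma not_glue_mid_lt_right :
    ¬ glue α β (castAdd q (last p)) < glue α β (natAdd (p + 1) j) :=
  (glue_right_lt_mid j).asymm

end Comparisons

lemma avoids132_glue_iff : Avoids132 _ (glue α β) ↔ Avoids132 p α ∧ Avoids132 q β := by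
  constructor
  · intro H
    refine ⟨fun i j k hij hjk h => H (castAdd q i.castSucc) (castAdd q j.castSucc)
      (castAdd q k.castSucc) (by simpa) (by simpa) (by simpa using h),
      fun i j k hij hjk h => H (natAdd (p + 1) i) (natAdd (p + 1) j) (natAdd (p + 1) k)
      (by simpa) (by simpa) (by simpa using h)⟩
  · rintro ⟨Hα, Hβ⟩ i j k hij hjk ⟨hik, hkj⟩
    rcases i.eq_left_or_eq_mid_or_eq_right with ⟨i, rfl⟩ | rfl | ⟨i, rfl⟩ <;>
    rcases j.eq_left_or_eq_mid_or_eq_right with ⟨j, rfl⟩ | rfl | ⟨j, rfl⟩ <;>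
    rcases k.eq_left_or_eq_mid_or_eq_right with ⟨k, rfl⟩ | rfl | ⟨k, rfl⟩ <;>
    simp at hij hjk hik hkj
    exacts [Hα i j k hij hjk ⟨hik, hkj⟩, Hβ i j k hij hjk ⟨hik, hkj⟩]

@[simp] lemma numLargerBefore_glue_left (i : Fin p) :
    numLargerBefore (glue α β) (castAdd q i.castSucc) = numLargerBefore α i := by
  rw [numLargerBefore_eq_sum, numLargerBefore_eq_sum, Fin.sum_univ_add, Fin.sum_univ_castSucc]
  simp

@[simp] lemma numLargerBefore_glue_mid : numLargerBefore (glue α β) (castAdd q (last p)) = 0 := by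
  rw [numLargerBefore_eq_sum, Fin.sum_univ_add, Fin.sum_univ_castSucc]
  simp

@[simp] lemma numLargerBefore_glue_right (j : Fin q) :
    numLargerBefore (glue α β) (natAdd (p + 1) j) = p + 1 + numLargerBefore β j := by
  rw [numLargerBefore_eq_sum, numLargerBefore_eq_sum, Fin.sum_univ_add, Fin.sum_univ_castSucc]
  simp

lemma forall_numLargerBefore_glue_lt_iff {k : ℕ} (hk : 1 ≤ k) :
    (∀ x, numLargerBefore (glue α β) x < k) ↔
      (∀ i, numLargerBefore α i < k) ∧ ∀ j, numLargerBefore β j < k - (p + 1) := by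
  constructor
  · intro h
    refine ⟨fun i => by simpa using h (castAdd q i.castSucc), fun j => ?_⟩
    have := h (natAdd (p + 1) j)
    simp only [numLargerBefore_glue_right] at this
    omega
  · rintro ⟨hα, hβ⟩ x
    rcases x.eq_left_or_eq_mid_or_eq_right with ⟨i, rfl⟩ | rfl | ⟨j, rfl⟩
    · simpa using hα i
    · simp only [numLargerBefore_glue_mid]
      omega
    · have := hβ j
      simp only [numLargerBefore_glue_right]
      omega

lemma glue_mem_boundedAvoiders_iff {k : ℕ} (hk : 1 ≤ k) :
    glue α β ∈ boundedAvoiders _ k ↔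
      α ∈ boundedAvoiders p k ∧ β ∈ boundedAvoiders q (k - (p + 1)) := by
  simp only [boundedAvoiders, Set.mem_ofPred_eq, avoids132_glue_iff,
    forall_numLargerBefore_glue_lt_iff α β hk]
  tauto

lemma glue_le_glue_mid (x : Fin (p + 1 + q)) : glue α β x ≤ glue α β (castAdd q (last p)) := by
  rw [Fin.le_def, val_glue_mid]
  have := (glue α β x).isLt
  omega

lemma glue_injective₂ {α' : Perm (Fin p)} {β' : Perm (Fin q)} (h : glue α β = glue α' β') :
    α = α' ∧ β = β' := by
  constructor <;> ext i
  · simpa [Fin.ext_iff] using Equiv.congr_fun h (castAdd q i.castSucc)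
  · simpa [Fin.ext_iff] using Equiv.congr_fun h (natAdd (p + 1) i)

end Glue

section MaxPosition

variable {n : ℕ} (σ : Perm (Fin n))

lemma card_le_of_forall_apply_lt {s : Finset (Fin n)} {x : Fin n} (h : ∀ y ∈ s, σ x < σ y) :
    #s ≤ n - 1 - σ x := by
  rw [← Fin.card_Ioi]
  exact card_le_card_of_injOn σ (fun y hy => by simpa using h y hy) σ.injective.injOn

lemma card_le_of_forall_apply_gt {s : Finset (Fin n)} {x : Fin n} (h : ∀ y ∈ s, σ y < σ x) :
    #s ≤ σ x := by
  rw [← Fin.card_Iio]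
  exact card_le_card_of_injOn σ (fun y hy => by simpa using h y hy) σ.injective.injOn

variable {σ} {P : Fin n}

lemma apply_lt_apply_of_forall_le {x : Fin n} (hP : ∀ y, σ y ≤ σ P) (hx : x ≠ P) : σ x < σ P :=
  (hP x).lt_of_ne (σ.injective.ne hx)

lemma Avoids132.apply_lt_apply_of_lt_of_lt (hσ : Avoids132 n σ) (hP : ∀ y, σ y ≤ σ P) {i x : Fin n}
    (hi : i < P) (hx : P < x) : σ x < σ i := by
  by_contra! h
  exact hσ i P x hi hx
    ⟨h.lt_of_ne (σ.injective.ne (hi.trans hx).ne), apply_lt_apply_of_forall_le hP hx.ne'⟩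

end MaxPosition

section MaxInMiddle

variable {p q : ℕ} {σ : Perm (Fin (p + 1 + q))}

lemma apply_natAdd_lt_apply_castAdd_castSucc (hσ : Avoids132 _ σ)
    (hP : ∀ y, σ y ≤ σ (castAdd q (last p))) (i : Fin p) (j : Fin q) :
    σ (natAdd (p + 1) j) < σ (castAdd q i.castSucc) :=
  hσ.apply_lt_apply_of_lt_of_lt hP (by simp) (by simp)

lemma val_apply_natAdd_lt (hσ : Avoids132 _ σ) (hP : ∀ y, σ y ≤ σ (castAdd q (last p)))
    (j : Fin q) : (σ (natAdd (p + 1) j) : ℕ) < q := by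
  have key : ∀ y ∈ univ.map (castAddEmb q), σ (natAdd (p + 1) j) < σ y := by
    simp only [mem_map, mem_univ, true_and, forall_exists_index, forall_apply_eq_imp_iff]
    intro y
    induction y using lastCases with
    | last => exact apply_lt_apply_of_forall_le hP (castAdd_lt_natAdd _ j).ne'
    | cast i => exact apply_natAdd_lt_apply_castAdd_castSucc hσ hP i j
  have := card_le_of_forall_apply_lt σ key
  simp only [card_map, card_univ, Fintype.card_fin] at this
  omega

lemma le_val_apply_castAdd_castSucc (hσ : Avoids132 _ σ)
    (hP : ∀ y, σ y ≤ σ (castAdd q (last p))) (i : Fin p) : q ≤ (σ (castAdd q i.castSucc) : ℕ) := by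
  have := card_le_of_forall_apply_gt σ (s := univ.map (natAddEmb (p + 1)))
    (by simpa using apply_natAdd_lt_apply_castAdd_castSucc hσ hP i)
  simpa using this

lemma val_apply_castAdd_last (hP : ∀ y, σ y ≤ σ (castAdd q (last p))) :
    (σ (castAdd q (last p)) : ℕ) = p + q := by
  have hcard := card_le_of_forall_apply_gt σ (s := univ.erase (castAdd q (last p)))
    fun y hy => apply_lt_apply_of_forall_le hP (ne_of_mem_erase hy)
  have := (σ (castAdd q (last p))).isLt
  simp only [card_erase_of_mem (mem_univ _), card_univ, Fintype.card_fin] at hcard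
  omega

lemma val_apply_castAdd_castSucc_lt (hP : ∀ y, σ y ≤ σ (castAdd q (last p))) (i : Fin p) :
    (σ (castAdd q i.castSucc) : ℕ) < p + q := by
  rw [← val_apply_castAdd_last hP, ← Fin.lt_def]
  exact apply_lt_apply_of_forall_le hP (castAdd_castSucc_lt_castAdd_last i).ne

lemma exists_glue_eq (hσ : Avoids132 _ σ) (hP : ∀ y, σ y ≤ σ (castAdd q (last p))) :
    ∃ α β, glue α β = σ := by
  have left_mem (i : Fin p) := And.intro (le_val_apply_castAdd_castSucc hσ hP i)
    (val_apply_castAdd_castSucc_lt hP i)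
  let α : Perm (Fin p) := Equiv.ofBijective (fun i => ⟨σ (castAdd q i.castSucc) - q, by
      have := left_mem i; omega⟩) <| Finite.injective_iff_bijective.mp fun i i' h => by
    have := left_mem i
    have := left_mem i'
    have h' : σ (castAdd q i.castSucc) = σ (castAdd q i'.castSucc) := Fin.ext (by
      simp only [Fin.mk.injEq] at h
      omega)
    simpa using h'
  let β : Perm (Fin q) :=
    Equiv.ofBijective (fun j => ⟨σ (natAdd (p + 1) j), val_apply_natAdd_lt hσ hP j⟩) <|
      Finite.injective_iff_bijective.mp fun j j' h => by simpa using Fin.ext (Fin.mk.inj h)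
  refine ⟨α, β, Equiv.ext fun x => ?_⟩
  rcases x.eq_left_or_eq_mid_or_eq_right with ⟨i, rfl⟩ | rfl | ⟨j, rfl⟩ <;> rw [Fin.ext_iff]
  · simp [α, Nat.add_sub_cancel' (left_mem i).1]
  · simp [val_apply_castAdd_last hP]
  · simp [β]

end MaxInMiddle

lemma card_boundedAvoiders_max_at {n p q k : ℕ} (hk : 1 ≤ k) (h : p + 1 + q = n) (P : Fin n)
    (hP : (P : ℕ) = p) :
    Nat.card {σ : boundedAvoiders n k // ∀ y, σ.1 y ≤ σ.1 P} =
      Nat.card (boundedAvoiders p k) * Nat.card (boundedAvoiders q (k - (p + 1))) := by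
  subst h
  obtain rfl : P = castAdd q (last p) := Fin.ext hP
  rw [← Nat.card_prod]
  refine (Nat.card_congr (Equiv.ofBijective
    (fun ab => ⟨⟨glue ab.1.1 ab.2.1, (glue_mem_boundedAvoiders_iff _ _ hk).2 ⟨ab.1.2, ab.2.2⟩⟩,
      glue_le_glue_mid _ _⟩) ⟨fun ab ab' h => ?_, fun σ => ?_⟩)).symm
  · obtain ⟨hα, hβ⟩ := glue_injective₂ _ _ (congrArg (fun σ => σ.1.1) h)
    exact Prod.ext (Subtype.ext hα) (Subtype.ext hβ)
  · obtain ⟨⟨σ, hσ⟩, hP⟩ := σ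
    obtain ⟨α, β, rfl⟩ := exists_glue_eq hσ.1 hP
    obtain ⟨hα, hβ⟩ := (glue_mem_boundedAvoiders_iff α β hk).1 hσ
    exact ⟨(⟨α, hα⟩, ⟨β, hβ⟩), rfl⟩

lemma Equiv.Perm.symm_apply_last_eq_iff {m : ℕ} (σ : Perm (Fin (m + 1))) (P : Fin (m + 1)) :
    σ.symm (last m) = P ↔ ∀ y, σ y ≤ σ P := by
  rw [Equiv.symm_apply_eq]
  refine ⟨fun h y => h ▸ le_last _, fun h => le_antisymm ?_ (le_last _)⟩
  simpa using h (σ.symm (last m))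

lemma card_boundedAvoiders_succ (m k : ℕ) :
    Nat.card (boundedAvoiders (m + 1) k) =
      ∑ P : Fin (m + 1), Nat.card {σ : boundedAvoiders (m + 1) k // ∀ y, σ.1 y ≤ σ.1 P} := by
  rw [← Nat.card_sigma]
  exact Nat.card_congr <| (Equiv.sigmaFiberEquiv fun σ : boundedAvoiders (m + 1) k =>
    σ.1.symm (last m)).symm.trans <| Equiv.sigmaCongrRight fun P =>
      Equiv.subtypeEquivRight fun σ => σ.1.symm_apply_last_eq_iff P

lemma A_succ (m : ℕ) {k : ℕ} (hk : 1 ≤ k) :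
    A (m + 1) k = ∑ pq ∈ antidiagonal m, A pq.1 k * A pq.2 (k - (pq.1 + 1)) := by
  simp only [A_eq_card_boundedAvoiders]
  rw [card_boundedAvoiders_succ, Nat.sum_antidiagonal_eq_sum_range_succ_mk,
    ← Fin.sum_univ_eq_sum_range]
  exact sum_congr rfl fun P _ => card_boundedAvoiders_max_at hk (by omega) P rfl

lemma A_zero_left (k : ℕ) : A 0 k = 1 := by
  have : boundedAvoiders 0 k = Set.univ :=
    Set.eq_univ_of_forall fun σ => ⟨fun i => i.elim0, fun i => i.elim0⟩
  simp [A_eq_card_boundedAvoiders, this]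

lemma A_zero_right_of_pos {n : ℕ} (hn : 0 < n) : A n 0 = 0 := by
  have : boundedAvoiders n 0 = ∅ :=
    Set.eq_empty_of_forall_notMem fun σ hσ => Nat.not_lt_zero _ (hσ.2 ⟨0, hn⟩)
  simp [A_eq_card_boundedAvoiders, this]

lemma A_eq_catalan {n k : ℕ} (h : n ≤ k) : A n k = catalan n := by
  induction n using Nat.strong_induction_on generalizing k with
  | _ n ih =>
    rcases n with _ | m
    · simp [A_zero_left]
    rw [A_succ m (by omega), catalan_succ']
    refine sum_congr rfl fun pq hpq => ?_
    rw [HasAntidiagonal.mem_antidiagonal] at hpq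
    rw [ih pq.1 (by omega) (by omega), ih pq.2 (by omega) (by omega)]

theorem A_catalan_recurrence_general (n k : ℕ) (hk : 1 ≤ k) (hkn : k ≤ n) :
    A n k = A (n - 1) k + ∑ i ∈ Finset.Icc 1 (k - 1), catalan (i - 1) * A (n - i) (k - i) := by
  obtain ⟨m, rfl⟩ : ∃ m, n = m + 1 := ⟨n - 1, by omega⟩
  obtain ⟨l, rfl⟩ : ∃ l, k = l + 1 := ⟨k - 1, by omega⟩
  have hIcc : ∑ i ∈ Icc 1 l, catalan (i - 1) * A (m + 1 - i) (l + 1 - i) =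
      ∑ p ∈ range l, catalan p * A (m - p) (l - p) := by
    rw [← Ico_add_one_right_eq_Icc, sum_Ico_eq_sum_range]
    refine sum_congr rfl fun p _ => ?_
    congr 2 <;> omega
  have hrange : ∑ p ∈ range m, A p (l + 1) * A (m - p) (l + 1 - (p + 1)) =
      ∑ p ∈ range l, catalan p * A (m - p) (l - p) := by
    rw [← sum_subset (range_subset_range.mpr (by omega : l ≤ m))]
    · refine sum_congr rfl fun p hp => ?_
      rw [A_eq_catalan (by simp at hp; omega), Nat.add_sub_add_right]
    · intro p hp hpl
      simp only [mem_range, not_lt] at hp hpl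
      rw [Nat.add_sub_add_right, Nat.sub_eq_zero_of_le hpl, A_zero_right_of_pos (by omega),
        mul_zero]
  rw [A_succ m hk, Nat.sum_antidiagonal_eq_sum_range_succ_mk, sum_range_succ, hrange]
  simp only [Nat.add_sub_cancel, hIcc, Nat.sub_self, A_zero_left, mul_one, add_comm]

/-- For `n ≥ 2` and `1 ≤ k ≤ n`,
`A(n,k) = A(n-1,k) + ∑_{i=1}^{k-1} Cat(i-1) * A(n-i, k-i)`, where `Cat` is the
Catalan number. -/
theorem A_catalan_recurrence (n k : ℕ) (hn : 2 ≤ n) (hk : 1 ≤ k) (hkn : k ≤ n) :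
    A n k = A (n - 1) k + ∑ i ∈ Finset.Icc 1 (k - 1), catalan (i - 1) * A (n - i) (k - i) :=
  A_catalan_recurrence_general n k hk hkn
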